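/- arXiv:math/0612348 — 2 statements merged into one kernel-verified Lean document; each statement's English description precedes it below -/
import Mathlib

section
/- For the divisor function d, ∑_{m≥1} d(mv)/m^s = ζ(s)² d(v) B_v(s) for Re(s) > 1, where B_v(s) = ∏_{p^α||v} (1 - α/((α+1)p^s)). -/
/-!
For `v ≠ 0` the function `m ↦ d(mv)/d(v)` is multiplicative, and at `p ^ k` it equals
`(k + α + 1)/(α + 1)` with `α = v_p(v)`. This is also the value of `c ⋆ σ₀` at `p ^ k`,
where `c` is multiplicative, supported on the squarefree divisors of `v`, with
`c(p) = -α/(α + 1)`; hence `m ↦ d(mv)/d(v)` equals `c ⋆ σ₀`. Taking L-series, `L(σ₀) = ζ²`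
and `L(c)` is the finite Euler product `∏_{p ∣ v} (1 - α/((α + 1) p^s))`.
-/

open Finset

namespace Nat

theorem card_divisors_eq_prod_primeFactors_of_dvd {x N : ℕ} (hN : N ≠ 0) (hx : x ∣ N) :
    #x.divisors = ∏ p ∈ N.primeFactors, (x.factorization p + 1) := by
  rw [card_divisors (ne_zero_of_dvd_ne_zero hN hx)]
  refine prod_subset (primeFactors_mono hx hN) fun p _ hp => ?_
  rw [← support_factorization, Finsupp.notMem_support_iff] at hp
  rw [hp, zero_add]

theorem card_divisors_mul_mul_card_divisors {m n : ℕ} (hmn : m.Coprime n) (v : ℕ) :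
    #(m * v).divisors * #(n * v).divisors = #(m * n * v).divisors * #v.divisors := by
  rcases eq_or_ne m 0 with rfl | hm
  · simp [(coprime_zero_left n).mp hmn]
  rcases eq_or_ne n 0 with rfl | hn
  · simp [(coprime_zero_right m).mp hmn]
  rcases eq_or_ne v 0 with rfl | hv
  · simp
  have hN : m * n * v ≠ 0 := by positivity
  rw [card_divisors_eq_prod_primeFactors_of_dvd hN ⟨n, by ring⟩,
    card_divisors_eq_prod_primeFactors_of_dvd hN ⟨m, by ring⟩,
    card_divisors_eq_prod_primeFactors_of_dvd hN dvd_rfl,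
    card_divisors_eq_prod_primeFactors_of_dvd hN ⟨m * n, by ring⟩,
    ← prod_mul_distrib, ← prod_mul_distrib]
  refine prod_congr rfl fun p _ => ?_
  have hdisj : m.factorization p = 0 ∨ n.factorization p = 0 := by
    by_contra! h
    exact Finset.disjoint_left.mp hmn.disjoint_primeFactors
      (by simpa [← support_factorization] using h.1)
      (by simpa [← support_factorization] using h.2)
  simp only [factorization_mul hm hv, factorization_mul hn hv,
    factorization_mul (mul_ne_zero hm hn) hv, factorization_mul hm hn, Finsupp.add_apply]
  rcases hdisj with h | h <;> rw [h] <;> ring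

theorem card_divisors_prime_pow_mul {p : ℕ} (hp : p.Prime) (k : ℕ) {v : ℕ} (hv : v ≠ 0) :
    #(p ^ k * v).divisors * (v.factorization p + 1)
      = (k + v.factorization p + 1) * #v.divisors := by
  have hcard (i : ℕ) :
      #(p ^ i * ordCompl[p] v).divisors = (i + 1) * #(ordCompl[p] v).divisors := by
    rw [((coprime_ordCompl hp hv).pow_left i).card_divisors_mul, divisors_prime_pow hp,
      card_map, card_range]
  set α := v.factorization p
  have hv' : p ^ α * ordCompl[p] v = v := ordProj_mul_ordCompl_eq_self v p
  rw [← hv', ← mul_assoc, ← pow_add, hcard, hcard]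
  ring

end Nat

namespace ArithmeticFunction

open scoped ArithmeticFunction.Moebius ArithmeticFunction.sigma ArithmeticFunction.zeta

theorem mul_apply_prime_pow_succ_of_apply_prime_pow_eq_zero {R : Type*} [Semiring R]
    {f g : ArithmeticFunction R} {p : ℕ} (hp : p.Prime) (hf₁ : f 1 = 1)
    (hf : ∀ i, 2 ≤ i → f (p ^ i) = 0) (k : ℕ) :
    (f * g) (p ^ (k + 1)) = g (p ^ (k + 1)) + f p * g (p ^ k) := by
  rw [mul_apply, Nat.sum_divisorsAntidiagonal (f · * g ·), Nat.sum_divisors_prime_pow hp,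
    sum_range_succ', sum_range_succ', sum_eq_zero fun i _ => by rw [hf _ (by omega), zero_mul]]
  simp [hf₁, pow_succ, hp.pos, add_comm]

theorem IsMultiplicative.prod_one_add_eq_sum_divisors {R : Type*} [CommSemiring R]
    {f : ArithmeticFunction R} (hf : f.IsMultiplicative)
    (hsq : ∀ p i, p.Prime → 2 ≤ i → f (p ^ i) = 0) {n : ℕ} (hn : n ≠ 0) :
    ∏ p ∈ n.primeFactors, (1 + f p) = ∑ d ∈ n.divisors, f d := by
  rw [← coe_mul_zeta_apply,
    (hf.mul isMultiplicative_zeta.natCast).multiplicative_factorization _ hn, Finsupp.prod,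
    Nat.support_factorization]
  refine prod_congr rfl fun p hp => ?_
  have hp' := Nat.prime_of_mem_primeFactors hp
  obtain ⟨k, hk⟩ := Nat.exists_eq_add_one_of_ne_zero
    (hp'.factorization_pos_of_dvd hn (Nat.dvd_of_mem_primeFactors hp)).ne'
  rw [hk, mul_apply_prime_pow_succ_of_apply_prime_pow_eq_zero hp' hf.map_one (hsq p · hp')]
  simp [hp'.ne_zero]

section

variable (K : Type*) [Field K]

noncomputable def shiftedDivisorRatio (v : ℕ) : ArithmeticFunction K :=
  ⟨fun m => (#(m * v).divisors : K) / #v.divisors, by simp⟩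

noncomputable def divisorCorrection (v : ℕ) : ArithmeticFunction K :=
  pmul (μ : ArithmeticFunction K)
    (prodPrimeFactors fun p => (v.factorization p : K) / (v.factorization p + 1))

variable {K}

theorem shiftedDivisorRatio_apply (v m : ℕ) :
    shiftedDivisorRatio K v m = (#(m * v).divisors : K) / #v.divisors := rfl

theorem isMultiplicative_shiftedDivisorRatio [CharZero K] {v : ℕ} (hv : v ≠ 0) :
    (shiftedDivisorRatio K v).IsMultiplicative := by
  have hd : (#v.divisors : K) ≠ 0 := by simpa using hv
  refine ⟨by simp [shiftedDivisorRatio_apply, hd], fun {m n} hmn => ?_⟩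
  rw [shiftedDivisorRatio_apply, shiftedDivisorRatio_apply, shiftedDivisorRatio_apply,
    div_mul_div_comm, eq_div_iff (mul_ne_zero hd hd), ← mul_assoc, div_mul_cancel₀ _ hd]
  exact_mod_cast (Nat.card_divisors_mul_mul_card_divisors hmn v).symm

theorem shiftedDivisorRatio_apply_prime_pow [CharZero K] {v p : ℕ} (hv : v ≠ 0) (hp : p.Prime)
    (k : ℕ) :
    shiftedDivisorRatio K v (p ^ k)
      = (k + v.factorization p + 1) / (v.factorization p + 1) := by
  rw [shiftedDivisorRatio_apply, div_eq_div_iff (by simpa using hv) (Nat.cast_add_one_ne_zero _)]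
  exact_mod_cast Nat.card_divisors_prime_pow_mul hp k hv

theorem isMultiplicative_divisorCorrection (v : ℕ) : (divisorCorrection K v).IsMultiplicative :=
  isMultiplicative_moebius.intCast.pmul (IsMultiplicative.prodPrimeFactors _)

theorem divisorCorrection_apply_prime {v p : ℕ} (hp : p.Prime) :
    divisorCorrection K v p = -((v.factorization p : K) / (v.factorization p + 1)) := by
  simp [divisorCorrection, hp, hp.ne_zero, moebius_apply_prime]

theorem divisorCorrection_apply_prime_pow {v p i : ℕ} (hp : p.Prime) (hi : 2 ≤ i) :
    divisorCorrection K v (p ^ i) = 0 := by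
  simp [divisorCorrection, moebius_apply_prime_pow hp (by omega : i ≠ 0), show i ≠ 1 by omega]

theorem dvd_of_divisorCorrection_apply_ne_zero {v n : ℕ} (h : divisorCorrection K v n ≠ 0) :
    n ∣ v := by
  rcases eq_or_ne v 0 with rfl | hv
  · exact dvd_zero n
  have hn : n ≠ 0 := by
    rintro rfl
    exact h ArithmeticFunction.map_zero
  rw [divisorCorrection, pmul_apply, prodPrimeFactors_apply hn, intCoe_apply] at h
  have hsq : Squarefree n := moebius_ne_zero_iff_squarefree.mp fun hμ => by simp [hμ] at h
  rw [← Nat.prod_primeFactors_of_squarefree hsq, Nat.prod_primeFactors_dvd_iff hv]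
  intro p hp
  have hw := div_ne_zero_iff.mp (prod_ne_zero_iff.mp (right_ne_zero_of_mul h) p hp)
  rw [← Nat.support_factorization, Finsupp.mem_support_iff]
  exact fun hα => hw.1 (by simp [hα])

theorem shiftedDivisorRatio_eq_divisorCorrection_mul_sigma_zero [CharZero K] {v : ℕ}
    (hv : v ≠ 0) :
    shiftedDivisorRatio K v = divisorCorrection K v * (σ 0 : ArithmeticFunction ℕ) := by
  refine (IsMultiplicative.eq_iff_eq_on_prime_powers _ (isMultiplicative_shiftedDivisorRatio hv)
    _ ((isMultiplicative_divisorCorrection v).mul isMultiplicative_sigma.natCast)).mpr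
    fun p k hp => ?_
  rcases k with _ | k
  · simp [(isMultiplicative_shiftedDivisorRatio hv).map_one,
      (isMultiplicative_divisorCorrection v).map_one]
  rw [shiftedDivisorRatio_apply_prime_pow hv hp,
    mul_apply_prime_pow_succ_of_apply_prime_pow_eq_zero hp
      (isMultiplicative_divisorCorrection v).map_one
      (fun _ => divisorCorrection_apply_prime_pow hp),
    divisorCorrection_apply_prime hp, natCoe_apply, natCoe_apply,
    sigma_zero_apply_prime_pow hp, sigma_zero_apply_prime_pow hp]
  field_simp
  push_cast
  ring

end

open LSeries in
theorem isMultiplicative_toArithmeticFunction_term {f : ArithmeticFunction ℂ}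
    (hf : f.IsMultiplicative) (s : ℂ) :
    (toArithmeticFunction (term (f ·) s)).IsMultiplicative := by
  refine IsMultiplicative.iff_ne_zero.mpr ⟨by simp [toArithmeticFunction, hf.map_one],
    fun {m n} hm hn hmn => ?_⟩
  simp only [toArithmeticFunction, coe_mk, mul_ne_zero hm hn, hm, hn, if_false,
    term_of_ne_zero (mul_ne_zero hm hn), term_of_ne_zero hm, term_of_ne_zero hn,
    hf.map_mul_of_coprime hmn, Nat.cast_mul, Complex.natCast_mul_natCast_cpow]
  ring

open LSeries in
theorem LSeriesHasSum_divisorCorrection {v : ℕ} (hv : v ≠ 0) (s : ℂ) :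
    LSeriesHasSum (divisorCorrection ℂ v ·) s
      (∏ p ∈ v.primeFactors,
        (1 - (v.factorization p : ℂ) / (((v.factorization p : ℂ) + 1) * (p : ℂ) ^ s))) := by
  set g := toArithmeticFunction (term (divisorCorrection ℂ v ·) s)
  have hg (n : ℕ) : g n = term (divisorCorrection ℂ v ·) s n := by
    rcases eq_or_ne n 0 with rfl | hn
    · simp [g, toArithmeticFunction]
    · simp [g, toArithmeticFunction, hn]
  have hsupp (n : ℕ) (hn : n ∉ v.divisors) : term (divisorCorrection ℂ v ·) s n = 0 := by
    rcases eq_or_ne n 0 with rfl | hn0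
    · exact term_zero _ _
    rw [term_of_ne_zero hn0, div_eq_zero_iff]
    exact .inl (not_imp_comm.mp dvd_of_divisorCorrection_apply_ne_zero
      fun hdvd => hn (Nat.mem_divisors.mpr ⟨hdvd, hv⟩))
  have hsq (p i : ℕ) (hp : p.Prime) (hi : 2 ≤ i) : g (p ^ i) = 0 := by
    rw [hg, term_of_ne_zero (pow_ne_zero _ hp.ne_zero), divisorCorrection_apply_prime_pow hp hi,
      zero_div]
  suffices h : ∏ p ∈ v.primeFactors,
      (1 - (v.factorization p : ℂ) / (((v.factorization p : ℂ) + 1) * (p : ℂ) ^ s))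
      = ∑ d ∈ v.divisors, g d by
    simp_rw [h, hg]
    exact hasSum_sum_of_ne_finset_zero hsupp
  rw [← IsMultiplicative.prod_one_add_eq_sum_divisors
    (isMultiplicative_toArithmeticFunction_term (isMultiplicative_divisorCorrection v) s) hsq hv]
  refine prod_congr rfl fun p hp => ?_
  have hp' := Nat.prime_of_mem_primeFactors hp
  rw [hg, term_of_ne_zero hp'.ne_zero, divisorCorrection_apply_prime hp', neg_div, div_div,
    ← sub_eq_add_neg]

theorem LSeriesHasSum_sigma_zero {s : ℂ} (hs : 1 < s.re) :
    LSeriesHasSum ((σ 0 : ArithmeticFunction ℕ) : ArithmeticFunction ℂ) s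
      (riemannZeta s ^ 2) := by
  have hσ : ((σ 0 : ArithmeticFunction ℕ) : ArithmeticFunction ℂ) = ζ * ζ := by
    rw [← natCoe_mul, ← zeta_mul_pow_eq_sigma, pow_zero_eq_zeta]
  rw [hσ, sq]
  exact LSeriesHasSum_mul (LSeriesHasSum_zeta hs) (LSeriesHasSum_zeta hs)

end ArithmeticFunction

open ArithmeticFunction

/-- For the divisor function `d` and `Re s > 1`,
`∑_{m ≥ 1} d(mv)/m^s = ζ(s)² d(v) B_v(s)` where
`B_v(s) = ∏_{p^α ∥ v} (1 - α/((α+1) p^s))`. -/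
theorem divisor_shifted_lseries (v : ℕ) (hv : 1 ≤ v) (s : ℂ) (hs : 1 < s.re) :
    LSeries (fun m => ((m * v).divisors.card : ℂ)) s =
      riemannZeta s ^ 2 * (v.divisors.card : ℂ) *
        ∏ p ∈ v.primeFactors,
          (1 - (v.factorization p : ℂ) /
              (((v.factorization p : ℂ) + 1) * (p : ℂ) ^ s)) := by
  have hv0 : v ≠ 0 := Nat.one_le_iff_ne_zero.mp hv
  have hd : (fun m => ((m * v).divisors.card : ℂ))
      = (v.divisors.card : ℂ) • (shiftedDivisorRatio ℂ v ·) := by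
    funext m
    simp [shiftedDivisorRatio_apply, mul_div_cancel₀, hv0]
  rw [hd, shiftedDivisorRatio_eq_divisorCorrection_mul_sigma_zero hv0,
    ((LSeriesHasSum_mul (LSeriesHasSum_divisorCorrection hv0 s)
      (LSeriesHasSum_sigma_zero hs)).smul _).LSeries_eq]
  ring
end

section
/- For each prime p and integer j ≥ 0, ∑_{i=0}^{j} (i+1)(j-i+1) B_{p^{j-i},p^i}(1) = (j+1) + j(j+1)·(1-1/p)/(1+1/p) + ((j-1)j(j+1)/6)·(1-1/p)²/(1+1/p), where B_{p^α,p^β}(1) = 1 - ((3αβ+2α+2β)p - αβ)/((α+1)(β+1)p(p+1)). -/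
/-!
Multiplied by `d(p^α) d(p^β) = (α+1)(β+1)`, the local factor becomes
`1 + (α+β) c₁ + αβ c₂` with `c₁ = (1-1/p)/(1+1/p)` and `c₂ = (1-1/p)²/(1+1/p)`.
On the antidiagonal `α + β = j` only the `αβ` term varies, and `∑_{i ≤ j} i(j-i) = (j-1)j(j+1)/6`.
-/

open Finset

/-- The local factor `B_{p^α, p^β}(1)`, evaluated at `α = a`, `β = b`, `p = x`. -/
noncomputable def localFactor (a b x : ℝ) : ℝ :=
  1 - ((3 * a * b + 2 * a + 2 * b) * x - a * b) / ((a + 1) * (b + 1) * x * (x + 1))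

theorem mul_localFactor_eq {a b x : ℝ} (ha : a + 1 ≠ 0) (hb : b + 1 ≠ 0) (hx : x ≠ 0)
    (hx' : x + 1 ≠ 0) :
    (b + 1) * (a + 1) * localFactor a b x =
      1 + (a + b) * ((1 - 1 / x) / (1 + 1 / x)) + a * b * ((1 - 1 / x) ^ 2 / (1 + 1 / x)) := by
  unfold localFactor
  field_simp
  ring

theorem sum_range_natCast (n : ℕ) :
    ∑ i ∈ range (n + 1), (i : ℝ) = n * (n + 1) / 2 := by
  induction n with
  | zero => simp
  | succ n ih => rw [sum_range_succ, ih]; push_cast; ring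

theorem sum_range_sub_mul_self (n : ℕ) :
    ∑ i ∈ range (n + 1), ((n : ℝ) - i) * i = (n - 1) * n * (n + 1) / 6 := by
  induction n with
  | zero => simp
  | succ n ih =>
    have hshift : ∑ i ∈ range (n + 1), ((↑(n + 1) : ℝ) - i) * i =
        ∑ i ∈ range (n + 1), ((n : ℝ) - i) * i + ∑ i ∈ range (n + 1), (i : ℝ) := by
      rw [← sum_add_distrib]
      exact sum_congr rfl fun i _ => by push_cast; ring
    rw [sum_range_succ, hshift, ih, sum_range_natCast]
    push_cast
    ring

/-- For each prime `p` and integer `j ≥ 0`,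
`∑_{i=0}^{j} (i+1)(j-i+1) B_{p^{j-i}, p^i}(1)
  = (j+1) + j(j+1)(1-1/p)/(1+1/p) + ((j-1)j(j+1)/6)(1-1/p)²/(1+1/p)`,
where `B_{p^α, p^β}(1) = 1 - ((3αβ+2α+2β)p - αβ)/((α+1)(β+1)p(p+1))`. -/
theorem local_divisor_correlation_sum (p : ℕ) (hp : p.Prime) (j : ℕ) :
    (∑ i ∈ Finset.range (j + 1),
        ((i : ℝ) + 1) * ((j : ℝ) - i + 1) *
          (1 - ((3 * ((j : ℝ) - i) * i + 2 * ((j : ℝ) - i) + 2 * i) * p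
                - ((j : ℝ) - i) * i) /
              ((((j : ℝ) - i) + 1) * ((i : ℝ) + 1) * p * ((p : ℝ) + 1)))) =
      ((j : ℝ) + 1) + j * ((j : ℝ) + 1) * (1 - 1 / (p : ℝ)) / (1 + 1 / (p : ℝ))
        + (((j : ℝ) - 1) * j * ((j : ℝ) + 1) / 6) * (1 - 1 / (p : ℝ)) ^ 2
            / (1 + 1 / (p : ℝ)) := by
  have hp0 : (p : ℝ) ≠ 0 := by exact_mod_cast hp.ne_zero
  have hp1 : (p : ℝ) + 1 ≠ 0 := by positivity
  set c₁ := (1 - 1 / (p : ℝ)) / (1 + 1 / (p : ℝ))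
  set c₂ := (1 - 1 / (p : ℝ)) ^ 2 / (1 + 1 / (p : ℝ))
  calc _ = ∑ i ∈ range (j + 1), (1 + j * c₁ + ((j : ℝ) - i) * i * c₂) := by
        refine sum_congr rfl fun i hi => ?_
        have hij : (i : ℝ) ≤ j := by exact_mod_cast Nat.lt_succ_iff.mp (mem_range.mp hi)
        have := mul_localFactor_eq (a := (j : ℝ) - i) (b := i) (by linarith) (by positivity) hp0 hp1
        rw [sub_add_cancel] at this
        exact this
    _ = _ := by
        rw [sum_add_distrib, ← sum_mul, sum_range_sub_mul_self, sum_const, card_range,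
          nsmul_eq_mul]
        push_cast
        ring
end
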